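/- Let S be a finitely generated submonoid of ℕ^d that is irreducible. Then S has at most one Frobenius element: if f₁ ∈ F(S) and f₂ ∈ F(S), then f₁ = f₂. -/

import Mathlib

open scoped BigOperators

/-- The natural cast of an element of `ℕ^d` into `ℚ^d`. -/
def toQ {d : ℕ} (x : Fin d → ℕ) : Fin d → ℚ := fun i => (x i : ℚ)

/-- The natural cast of an element of `ℕ^d` into `ℤ^d`. -/
def natToZ {d : ℕ} (x : Fin d → ℕ) : Fin d → ℤ := fun i => (x i : ℤ)

/-- The cone `pos(S)` of a submonoid `S ⊆ ℕ^d`: all nonnegative rational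
combinations of elements of `S`, as a subset of `ℚ^d`. -/
def posCone {d : ℕ} (S : AddSubmonoid (Fin d → ℕ)) : Set (Fin d → ℚ) :=
  {q | ∃ (k : ℕ) (c : Fin k → ℚ) (s : Fin k → (Fin d → ℕ)),
    (∀ i, 0 ≤ c i) ∧ (∀ i, s i ∈ S) ∧ q = ∑ i, c i • toQ (s i)}

/-- The gap set `H(S) = (pos(S) \ S) ∩ ℕ^d`. -/
def gaps {d : ℕ} (S : AddSubmonoid (Fin d → ℕ)) : Set (Fin d → ℕ) :=
  {x | toQ x ∈ posCone S ∧ x ∉ S}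

/-- The set of pseudo-Frobenius elements of `S`. -/
def PF {d : ℕ} (S : AddSubmonoid (Fin d → ℕ)) : Set (Fin d → ℕ) :=
  {a | a ∈ gaps S ∧ ∀ s ∈ S, s ≠ 0 → a + s ∈ S}

/-- A term order on `ℕ^d`: a total order compatible with addition for which
`0` is the least element. -/
def IsTermOrder {d : ℕ} (r : (Fin d → ℕ) → (Fin d → ℕ) → Prop) : Prop :=
  (∀ a b, r a b ∨ r b a) ∧ (∀ a b, r a b → r b a → a = b) ∧
    (∀ a b c, r a b → r b c → r a c) ∧ (∀ a, r 0 a) ∧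
    (∀ a b c, r a b → r (a + c) (b + c))

/-- The set of Frobenius elements of `S`: maxima of `H(S)` for some term order. -/
def FrobSet {d : ℕ} (S : AddSubmonoid (Fin d → ℕ)) : Set (Fin d → ℕ) :=
  {f | f ∈ gaps S ∧ ∃ r, IsTermOrder r ∧ ∀ h ∈ gaps S, r h f}

/-- The Apéry set of `S` relative to `b`:
`Ap(S,b) = {a ∈ S : a - b ∈ pos(S) \ S}`, the difference taken in `ℚ^d`. -/
def Apery {d : ℕ} (S : AddSubmonoid (Fin d → ℕ)) (b : Fin d → ℕ) : Set (Fin d → ℕ) :=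
  {a | a ∈ S ∧ (toQ a - toQ b) ∈ posCone S ∧ ¬ ∃ s ∈ S, toQ s = toQ a - toQ b}

/-- The partial order `≼_S`: `x ≼_S y` iff `y - x ∈ S`. -/
def leS {d : ℕ} (S : AddSubmonoid (Fin d → ℕ)) (x y : Fin d → ℕ) : Prop :=
  ∃ s ∈ S, x + s = y

/-- `a` is a `≼_S`-maximal element of `X`. -/
def MaximalIn {d : ℕ} (S : AddSubmonoid (Fin d → ℕ)) (X : Set (Fin d → ℕ))
    (a : Fin d → ℕ) : Prop :=
  a ∈ X ∧ ∀ a' ∈ X, a' ≠ a → ¬ leS S a a'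

/-- `S` is irreducible: it is not the intersection of two submonoids of `ℕ^d`
each properly containing it. -/
def IrreducibleMonoid {d : ℕ} (S : AddSubmonoid (Fin d → ℕ)) : Prop :=
  ¬ ∃ S₁ S₂ : AddSubmonoid (Fin d → ℕ), S < S₁ ∧ S < S₂ ∧
    (S : Set (Fin d → ℕ)) = (S₁ : Set (Fin d → ℕ)) ∩ (S₂ : Set (Fin d → ℕ))

/-- The multiplicity of `S`: componentwise infimum of `S \ {0}`. -/
noncomputable def mult {d : ℕ} (S : AddSubmonoid (Fin d → ℕ)) : Fin d → ℕ :=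
  fun i => sInf {n | ∃ s ∈ S, s ≠ 0 ∧ s i = n}

/-- `S` is a PI-monoid: `S = (a + T) ∪ {0}` for some submonoid `T` of `ℕ^d`
and some `a ∈ T \ {0}`. -/
def IsPIMonoid {d : ℕ} (S : AddSubmonoid (Fin d → ℕ)) : Prop :=
  ∃ (T : AddSubmonoid (Fin d → ℕ)) (a : Fin d → ℕ), a ∈ T ∧ a ≠ 0 ∧
    (S : Set (Fin d → ℕ)) = {x | ∃ t ∈ T, x = a + t} ∪ {0}

/-- `G` is a minimal system of generators of `S`. -/
def IsMinimalGenSet {d : ℕ} (S : AddSubmonoid (Fin d → ℕ)) (G : Set (Fin d → ℕ)) : Prop :=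
  AddSubmonoid.closure G = S ∧ ∀ G' ⊂ G, AddSubmonoid.closure G' ≠ S

/-!
A Frobenius element `f` is a gap that dominates every gap in some term order. Since `f ≺ f + a`
for `a ≠ 0`, no element `f + a` of the cone can be a gap, so `f + s ∈ S` for `s ∈ S \ {0}` and
`2f ∈ S`; hence `S ∪ {f}` is again a monoid. Two distinct Frobenius elements `f₁ ≠ f₂` would then
write `S = (S ∪ {f₁}) ∩ (S ∪ {f₂})`, contradicting irreducibility.
-/

lemma toQ_add {d : ℕ} (x y : Fin d → ℕ) : toQ (x + y) = toQ x + toQ y := by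
  funext i
  simp [toQ]

lemma toQ_mem_posCone {d : ℕ} {S : AddSubmonoid (Fin d → ℕ)} {s : Fin d → ℕ} (hs : s ∈ S) :
    toQ s ∈ posCone S :=
  ⟨1, fun _ => 1, fun _ => s, fun _ => zero_le_one, fun _ => hs, by simp⟩

lemma add_mem_posCone {d : ℕ} {S : AddSubmonoid (Fin d → ℕ)} {p q : Fin d → ℚ}
    (hp : p ∈ posCone S) (hq : q ∈ posCone S) : p + q ∈ posCone S := by
  obtain ⟨k, c, s, hc, hs, rfl⟩ := hp
  obtain ⟨l, c', s', hc', hs', rfl⟩ := hq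
  refine ⟨k + l, Fin.append c c', Fin.append s s', ?_, ?_, ?_⟩
  · simpa [Fin.forall_fin_add] using ⟨hc, hc'⟩
  · simpa [Fin.forall_fin_add] using ⟨hs, hs'⟩
  · simp [Fin.sum_univ_add]

lemma IsTermOrder.le_add_right {d : ℕ} {r : (Fin d → ℕ) → (Fin d → ℕ) → Prop}
    (hr : IsTermOrder r) (a b : Fin d → ℕ) : r a (a + b) := by
  obtain ⟨-, -, -, hzero, hadd⟩ := hr
  simpa [add_comm] using hadd 0 b a (hzero b)

lemma add_mem_of_mem_frobSet {d : ℕ} {S : AddSubmonoid (Fin d → ℕ)} {f a : Fin d → ℕ}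
    (hf : f ∈ FrobSet S) (hcone : toQ (f + a) ∈ posCone S) (ha : a ≠ 0) : f + a ∈ S := by
  obtain ⟨-, r, hr, hmax⟩ := hf
  by_contra hfa
  have hle : r (f + a) f := hmax _ ⟨hcone, hfa⟩
  have heq : f + a = f := hr.2.1 _ _ hle (hr.le_add_right f a)
  exact ha (by simpa using heq)

lemma frobSet_subset_PF {d : ℕ} (S : AddSubmonoid (Fin d → ℕ)) : FrobSet S ⊆ PF S :=
  fun f hf => ⟨hf.1, fun s hs hs0 =>
    add_mem_of_mem_frobSet hf (by rw [toQ_add]; exact add_mem_posCone hf.1.1 (toQ_mem_posCone hs))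
      hs0⟩

lemma add_self_mem_of_mem_frobSet {d : ℕ} {S : AddSubmonoid (Fin d → ℕ)} {f : Fin d → ℕ}
    (hf : f ∈ FrobSet S) : f + f ∈ S := by
  have hf0 : f ≠ 0 := fun h => hf.1.2 (h ▸ S.zero_mem)
  exact add_mem_of_mem_frobSet hf (by rw [toQ_add]; exact add_mem_posCone hf.1.1 hf.1.1) hf0

namespace AddSubmonoid

variable {M : Type*} [AddCommMonoid M]

def insertOfAddMem (S : AddSubmonoid M) {f : M} (hf : ∀ s ∈ S, s ≠ 0 → f + s ∈ S)
    (hff : f + f ∈ S) : AddSubmonoid M where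
  carrier := insert f S
  zero_mem' := Or.inr S.zero_mem
  add_mem' := by
    have hfs : ∀ s ∈ S, f + s ∈ insert f (S : Set M) := fun s hs => by
      rcases eq_or_ne s 0 with rfl | hs0
      · simp
      · exact Or.inr (hf s hs hs0)
    rintro x y (rfl | hx) (rfl | hy)
    · exact Or.inr hff
    · exact hfs y hy
    · rw [add_comm]; exact hfs x hx
    · exact Or.inr (S.add_mem hx hy)

@[simp]
lemma coe_insertOfAddMem (S : AddSubmonoid M) {f : M} (hf : ∀ s ∈ S, s ≠ 0 → f + s ∈ S)
    (hff : f + f ∈ S) : (S.insertOfAddMem hf hff : Set M) = insert f (S : Set M) :=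
  rfl

lemma lt_of_coe_eq_insert {S T : AddSubmonoid M} {f : M} (hf : f ∉ S)
    (hT : (T : Set M) = insert f (S : Set M)) : S < T :=
  SetLike.lt_iff_le_and_exists.2
    ⟨fun _ hx => SetLike.mem_coe.1 (hT ▸ Or.inr hx), f, SetLike.mem_coe.1 (hT ▸ Or.inl rfl), hf⟩

end AddSubmonoid

lemma IrreducibleMonoid.eq_of_coe_eq_insert {d : ℕ} {S T₁ T₂ : AddSubmonoid (Fin d → ℕ)}
    (hirr : IrreducibleMonoid S) {f₁ f₂ : Fin d → ℕ} (h₁ : f₁ ∉ S) (h₂ : f₂ ∉ S)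
    (hT₁ : (T₁ : Set (Fin d → ℕ)) = insert f₁ (S : Set (Fin d → ℕ)))
    (hT₂ : (T₂ : Set (Fin d → ℕ)) = insert f₂ (S : Set (Fin d → ℕ))) :
    f₁ = f₂ := by
  by_contra hne
  refine hirr ⟨T₁, T₂, AddSubmonoid.lt_of_coe_eq_insert h₁ hT₁,
    AddSubmonoid.lt_of_coe_eq_insert h₂ hT₂, ?_⟩
  ext x
  simp only [hT₁, hT₂, Set.mem_inter_iff, Set.mem_insert_iff, SetLike.mem_coe]
  grind

theorem irreducible_unique_frobenius_general {d : ℕ} (S : AddSubmonoid (Fin d → ℕ))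
    (hirr : IrreducibleMonoid S)
    (f₁ f₂ : Fin d → ℕ) (hf₁ : f₁ ∈ FrobSet S) (hf₂ : f₂ ∈ FrobSet S) :
    f₁ = f₂ :=
  hirr.eq_of_coe_eq_insert hf₁.1.2 hf₂.1.2
    (S.coe_insertOfAddMem ((frobSet_subset_PF S hf₁).2) (add_self_mem_of_mem_frobSet hf₁))
    (S.coe_insertOfAddMem ((frobSet_subset_PF S hf₂).2) (add_self_mem_of_mem_frobSet hf₂))

/-- A finitely generated irreducible submonoid of `ℕ^d` has at
most one Frobenius element. -/
theorem irreducible_unique_frobenius {d : ℕ} (S : AddSubmonoid (Fin d → ℕ))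
    (hfg : S.FG) (hirr : IrreducibleMonoid S)
    (f₁ f₂ : Fin d → ℕ) (hf₁ : f₁ ∈ FrobSet S) (hf₂ : f₂ ∈ FrobSet S) :
    f₁ = f₂ :=
  irreducible_unique_frobenius_general S hirr f₁ f₂ hf₁ hf₂
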